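/- For q ≥ 1, n ≥ 3: λ_q(n² − 4) = Σ_{q₁² q₂ = q} (1/q₂) Σ_{k mod q₂} e(kn/q₂) S(k², 1; q₂), where S(a,b;c) is the Kloosterman sum and e(t) = exp(2πit). -/

import Mathlib

open Finset ArithmeticFunction

/-- `e(t) = exp(2πit)`. -/
noncomputable def eC (t : ℝ) : ℂ := Complex.exp (2 * Real.pi * Complex.I * t)

/-- Kloosterman sum `S(a,b;c) = Σ_{y mod c, (y,c)=1} e((ay + b y⁻¹)/c)`,
where `y⁻¹` is the inverse of `y` mod `c`. -/
noncomputable def kloos (a b : ℤ) (c : ℕ) : ℂ :=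
  ∑ y ∈ (Finset.range c).filter (fun y => Nat.Coprime y c),
    eC ((((a * y + b * ((((y : ZMod c)⁻¹ : ZMod c)).val : ℤ)) : ℤ) : ℝ) / c)

/-- `ρ_q(δ) = #{x mod 2q : x² ≡ δ (mod 4q)}`. -/
def rho (q : ℕ) (δ : ℤ) : ℕ :=
  ((Finset.range (2 * q)).filter (fun x : ℕ => ((x : ℤ) ^ 2) % (4 * q) = δ % (4 * q))).card

/-- `λ_q(δ) = Σ_{q₁² q₂ q₃ = q} μ(q₂) ρ_{q₃}(δ)`. -/
def lam (q : ℕ) (δ : ℤ) : ℤ :=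
  ∑ t ∈ ((Finset.range (q + 1)) ×ˢ (Finset.range (q + 1)) ×ˢ (Finset.range (q + 1))).filter
      (fun t => t.1 ^ 2 * t.2.1 * t.2.2 = q),
    (moebius t.2.1 : ℤ) * (rho t.2.2 δ : ℤ)

section helpers


lemma eC_add (s t : ℝ) : eC (s + t) = eC s * eC t := by
  unfold eC
  rw [← Complex.exp_add]
  push_cast
  ring_nf

lemma eC_int (m : ℤ) : eC m = 1 := by
  unfold eC
  rw [show (2 * Real.pi * Complex.I * (m:ℝ) : ℂ) = (m:ℤ) * (2 * Real.pi * Complex.I) by push_cast; ring]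
  exact Complex.exp_int_mul_two_pi_mul_I m

lemma eC_add_int (t : ℝ) (m : ℤ) : eC (t + m) = eC t := by
  rw [eC_add, eC_int, mul_one]

lemma eC_add_nat (t : ℝ) (m : ℕ) : eC (t + m) = eC t := by
  rw [show ((m:ℕ):ℝ) = ((m:ℤ):ℝ) by norm_cast]
  exact eC_add_int t m

/-- `ψ_Q(a) = e(a/Q)` for natural `a`. -/
noncomputable def psi (Q : ℕ) (a : ℕ) : ℂ := eC (a / Q)

lemma psi_add (Q a b : ℕ) : psi Q (a + b) = psi Q a * psi Q b := by
  unfold psi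
  rw [← eC_add]
  congr 1
  push_cast
  ring

lemma psi_mod (Q : ℕ) (hQ : 0 < Q) (a : ℕ) : psi Q a = psi Q (a % Q) := by
  have hQ' : (Q : ℝ) ≠ 0 := Nat.cast_ne_zero.mpr hQ.ne'
  conv_lhs => rw [← Nat.mod_add_div a Q]
  unfold psi
  rw [show ((a % Q + Q * (a / Q) : ℕ) : ℝ) / Q
      = ((a % Q : ℕ) : ℝ)/Q + ((a/Q : ℕ) : ℝ) by
    rw [Nat.cast_add, Nat.cast_mul, add_div, mul_comm ((Q:ℝ)) _, mul_div_assoc,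
      div_self hQ', mul_one]]
  rw [eC_add_nat]

lemma psi_congr (Q : ℕ) (hQ : 0 < Q) {a b : ℕ} (h : a ≡ b [MOD Q]) : psi Q a = psi Q b := by
  rw [psi_mod Q hQ a, psi_mod Q hQ b, h]

lemma psi_pow (Q c k : ℕ) : psi Q (c * k) = (psi Q c) ^ k := by
  unfold psi eC
  rw [← Complex.exp_nat_mul]
  congr 1
  push_cast
  ring

lemma psi_eq_one_iff (Q : ℕ) (hQ : 0 < Q) (c : ℕ) : psi Q c = 1 ↔ Q ∣ c := by
  unfold psi eC
  rw [Complex.exp_eq_one_iff]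
  have h2 : (2 * Real.pi * Complex.I : ℂ) ≠ 0 := by
    simp [Real.pi_ne_zero, Complex.I_ne_zero]
  have hQ' : ((Q : ℕ) : ℂ) ≠ 0 := Nat.cast_ne_zero.mpr hQ.ne'
  constructor
  · rintro ⟨m, hm⟩
    have key : (((c:ℝ)/Q : ℝ) : ℂ) = (m : ℂ) := by
      have := mul_left_cancel₀ h2 (show 2*Real.pi*Complex.I * (((c:ℝ)/Q : ℝ):ℂ)
          = 2*Real.pi*Complex.I * (m:ℂ) by rw [hm]; ring)
      exact this
    have hc : (c : ℂ) = (m : ℂ) * Q := by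
      push_cast at key
      rw [div_eq_iff hQ'] at key
      exact_mod_cast key
    have hc' : (c : ℤ) = m * Q := by exact_mod_cast hc
    have : (Q : ℤ) ∣ (c : ℤ) := ⟨m, by linarith [hc']⟩
    exact_mod_cast this
  · rintro ⟨t, rfl⟩
    refine ⟨t, ?_⟩
    push_cast
    rw [mul_comm ((Q:ℂ)) (t:ℂ), mul_div_assoc, div_self hQ']
    ring

lemma sum_psi (Q : ℕ) (hQ : 0 < Q) (c : ℕ) :
    ∑ k ∈ Finset.range Q, psi Q (c * k) = if Q ∣ c then (Q : ℂ) else 0 := by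
  by_cases h : Q ∣ c
  · simp only [h, if_true]
    rw [Finset.sum_congr rfl (fun k _ => by rw [psi_pow, (psi_eq_one_iff Q hQ c).mpr h, one_pow])]
    simp
  · simp only [h, if_false]
    have hz : psi Q c ≠ 1 := fun hc => h ((psi_eq_one_iff Q hQ c).mp hc)
    rw [Finset.sum_congr rfl (fun k _ => psi_pow Q c k), geom_sum_eq hz]
    rw [← psi_pow, show c * Q = Q * c by ring]
    rw [show psi Q (Q * c) = 1 from ?_]
    · simp
    · unfold psi
      rw [show ((Q * c : ℕ) : ℝ)/Q = ((c:ℤ):ℝ) by push_cast; field_simp]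
      exact eC_int c

lemma moebius_sum (m : ℕ) : ∑ d ∈ m.divisors, (moebius d : ℤ) = if m = 1 then 1 else 0 := by
  have h := ArithmeticFunction.coe_mul_zeta_apply (f := (moebius : ArithmeticFunction ℤ)) (x := m)
  rw [moebius_mul_coe_zeta] at h
  rw [← h, ArithmeticFunction.one_apply]

lemma periodic_shift (F : ℕ → ℂ) (e : ℕ) (h : ∀ m, F (m + e) = F m) (t m : ℕ) :
    F (t * e + m) = F m := by
  induction t with
  | zero => simp
  | succ s ihs =>
    rw [Nat.succ_mul, add_comm (s*e) e, add_assoc, add_comm e _, h, ihs]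

lemma sum_range_mul_periodic (F : ℕ → ℂ) (e t : ℕ) (h : ∀ m, F (m + e) = F m) :
    ∑ m ∈ Finset.range (t * e), F m = t * ∑ m ∈ Finset.range e, F m := by
  induction t with
  | zero => simp
  | succ t ih =>
    rw [Nat.succ_mul, Finset.range_add, Finset.sum_union (by
      simp only [Finset.disjoint_left, Finset.mem_range, Finset.mem_map,
        addLeftEmbedding_apply]
      rintro a ha ⟨b, hb, rfl⟩
      omega), Finset.sum_map, ih]
    have : ∀ i, F (addLeftEmbedding (t*e) i) = F i := fun i => by
      simpa using periodic_shift F e h t i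
    rw [Finset.sum_congr rfl (fun i _ => this i)]
    push_cast
    ring

lemma sum_multiples (Q d : ℕ) (hQ : 0 < Q) (hd : d ∣ Q) (G : ℕ → ℂ) :
    ∑ y ∈ (Finset.range Q).filter (fun y => d ∣ y), G y
      = ∑ z ∈ Finset.range (Q / d), G (d * z) := by
  have hd0 : 0 < d := Nat.pos_of_dvd_of_pos hd hQ
  refine Finset.sum_nbij' (fun y => y / d) (fun z => d * z) ?_ ?_ ?_ ?_ ?_
  · intro y hy
    simp only [Finset.mem_filter, Finset.mem_range] at hy ⊢
    exact Nat.div_lt_div_of_lt_of_dvd hd hy.1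
  · intro z hz
    simp only [Finset.mem_filter, Finset.mem_range] at hz ⊢
    refine ⟨?_, Dvd.intro z rfl⟩
    calc d * z < d * (Q / d) := by exact (Nat.mul_lt_mul_left hd0).mpr hz
    _ = Q := Nat.mul_div_cancel' hd
  · intro y hy
    simp only [Finset.mem_filter] at hy
    exact Nat.mul_div_cancel' hy.2
  · intro z _
    exact Nat.mul_div_cancel_left z hd0
  · intro y hy
    simp only [Finset.mem_filter] at hy
    rw [Nat.mul_div_cancel' hy.2]

lemma psi_div (Q d : ℕ) (hQ : 0 < Q) (hd : d ∣ Q) (a : ℕ) : psi Q (d * a) = psi (Q / d) a := by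
  have hd0 : 0 < d := Nat.pos_of_dvd_of_pos hd hQ
  unfold psi
  congr 1
  obtain ⟨e, rfl⟩ := hd
  rw [Nat.mul_div_cancel_left e hd0]
  have he : 0 < e := by
    rcases Nat.eq_zero_or_pos e with h | h
    · subst h; simp at hQ
    · exact h
  have he0 : ((e:ℕ):ℝ) ≠ 0 := Nat.cast_ne_zero.mpr he.ne'
  have hd0' : ((d:ℕ):ℝ) ≠ 0 := Nat.cast_ne_zero.mpr hd0.ne'
  push_cast
  field_simp

lemma ramanujan (Q : ℕ) (hQ : 0 < Q) (c : ℕ) :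
    ∑ y ∈ (Finset.range Q).filter (fun y => Nat.Coprime y Q), psi Q (y * c)
      = ∑ d ∈ Q.divisors, (moebius d : ℂ) * (if (Q / d) ∣ c then ((Q / d : ℕ) : ℂ) else 0) := by
  have step1 : ∀ y : ℕ, (if Nat.Coprime y Q then (1:ℂ) else 0)
      = ∑ d ∈ (Q.divisors.filter (fun d => d ∣ y)), (moebius d : ℂ) := by
    intro y
    have hg : 0 < Nat.gcd y Q := Nat.gcd_pos_of_pos_right y hQ
    have : Q.divisors.filter (fun d => d ∣ y) = (Nat.gcd y Q).divisors := by
      ext d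
      simp only [Finset.mem_filter, Nat.mem_divisors, Nat.dvd_gcd_iff]
      constructor
      · rintro ⟨⟨h1, h2⟩, h3⟩; exact ⟨⟨h3, h1⟩, hg.ne'⟩
      · rintro ⟨⟨h1, h2⟩, h3⟩; exact ⟨⟨h2, hQ.ne'⟩, h1⟩
    rw [this, show (∑ d ∈ (Nat.gcd y Q).divisors, (moebius d : ℂ))
        = ((∑ d ∈ (Nat.gcd y Q).divisors, (moebius d : ℤ) : ℤ) : ℂ) by push_cast; rfl,
      moebius_sum]
    unfold Nat.Coprime
    split <;> simp_all
  calc ∑ y ∈ (Finset.range Q).filter (fun y => Nat.Coprime y Q), psi Q (y * c)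
      = ∑ y ∈ Finset.range Q, (if Nat.Coprime y Q then (1:ℂ) else 0) * psi Q (y * c) := by
        rw [Finset.sum_filter]
        refine Finset.sum_congr rfl fun y _ => ?_
        split <;> simp
    _ = ∑ y ∈ Finset.range Q, ∑ d ∈ Q.divisors.filter (fun d => d ∣ y), (moebius d : ℂ) * psi Q (y * c) := by
        refine Finset.sum_congr rfl fun y _ => ?_
        rw [step1 y, Finset.sum_mul]
    _ = ∑ y ∈ Finset.range Q, ∑ d ∈ Q.divisors, if d ∣ y then (moebius d : ℂ) * psi Q (y * c) else 0 := by
        refine Finset.sum_congr rfl fun y _ => ?_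
        rw [Finset.sum_filter]
    _ = ∑ d ∈ Q.divisors, ∑ y ∈ Finset.range Q, if d ∣ y then (moebius d : ℂ) * psi Q (y * c) else 0 :=
        Finset.sum_comm
    _ = ∑ d ∈ Q.divisors, (moebius d : ℂ) * ∑ y ∈ (Finset.range Q).filter (fun y => d ∣ y), psi Q (y * c) := by
        refine Finset.sum_congr rfl fun d _ => ?_
        rw [Finset.mul_sum, Finset.sum_filter]
    _ = ∑ d ∈ Q.divisors, (moebius d : ℂ) * (if (Q / d) ∣ c then ((Q / d : ℕ) : ℂ) else 0) := by
        refine Finset.sum_congr rfl fun d hd => ?_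
        obtain ⟨hdvd, -⟩ := Nat.mem_divisors.mp hd
        have he : 0 < Q / d := Nat.div_pos (Nat.le_of_dvd hQ hdvd) (Nat.pos_of_dvd_of_pos hdvd hQ)
        rw [sum_multiples Q d hQ hdvd]
        congr 1
        rw [← sum_psi (Q/d) he c]
        refine Finset.sum_congr rfl fun z _ => ?_
        rw [show d * z * c = d * (z * c) by ring, psi_div Q d hQ hdvd, mul_comm (z) c]

lemma sq_modeq {e a b : ℤ} (h : a ≡ b [ZMOD 2*e]) : a^2 ≡ b^2 [ZMOD 4*e] := by
  obtain ⟨t, ht⟩ := h.dvd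
  rw [Int.modEq_iff_dvd]
  exact ⟨t * a + e * t^2, by linear_combination (a+b+2*e*t) * ht⟩

lemma count_eq_rho (e n : ℕ) (he : 0 < e) (hn : 3 ≤ n) :
    ((Finset.range e).filter (fun m => e ∣ (m * m + m * n + 1))).card
      = rho e ((n:ℤ)^2 - 4) := by
  unfold rho
  have h2e : 0 < 2 * e := by omega
  have he' : (0:ℤ) < (e:ℤ) := by exact_mod_cast he
  refine Finset.card_nbij' (fun m => (2*m+n) % (2*e))
    (fun x => ((((x:ℤ) - n)/2) % (e:ℤ)).toNat) ?_ ?_ ?_ ?_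
  · -- forward membership
    intro m hm
    simp only [Finset.mem_coe, Finset.mem_filter, Finset.mem_range] at hm ⊢
    obtain ⟨hmlt, hdvd⟩ := hm
    refine ⟨Nat.mod_lt _ h2e, ?_⟩
    set x : ℕ := (2*m+n) % (2*e) with hxdef
    have hxz : (x:ℤ) = ((2*m+n : ℕ) : ℤ) % ((2*e : ℕ) : ℤ) := by
      rw [hxdef]; push_cast [Int.natCast_mod]; ring_nf
    have hx : (x:ℤ) ≡ ((2*m+n : ℕ) : ℤ) [ZMOD 2*(e:ℤ)] := by
      rw [hxz]
      have : ((2*e : ℕ) : ℤ) = 2*(e:ℤ) := by push_cast; ring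
      rw [this]
      exact Int.emod_emod_of_dvd _ dvd_rfl
    have hsq : (x:ℤ)^2 ≡ ((2*m+n : ℕ) : ℤ)^2 [ZMOD 4*(e:ℤ)] := sq_modeq hx
    obtain ⟨k, hk⟩ := hdvd
    have hkz : ((m*m + m*n + 1 : ℕ) : ℤ) = (e:ℤ) * k := by exact_mod_cast hk
    have key : ((2*m+n : ℕ) : ℤ)^2 ≡ (n:ℤ)^2 - 4 [ZMOD 4*(e:ℤ)] := by
      rw [Int.modEq_iff_dvd]
      refine ⟨-k, ?_⟩
      push_cast at hkz ⊢
      linear_combination (-4) * hkz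
    have := hsq.trans key
    show (x:ℤ)^2 % (4 * (e:ℤ)) = ((n:ℤ)^2 - 4) % (4 * (e:ℤ))
    exact this
  · -- backward membership
    intro x hx
    simp only [Finset.mem_coe, Finset.mem_filter, Finset.mem_range] at hx ⊢
    obtain ⟨hxlt, hmod⟩ := hx
    have hmod' : (x:ℤ)^2 ≡ (n:ℤ)^2 - 4 [ZMOD 4*(e:ℤ)] := hmod
    -- parity
    have h4' : (4:ℤ) ∣ ((x:ℤ)-n)*((x:ℤ)+n) := by
      obtain ⟨s, hs⟩ := (hmod'.symm).dvd
      exact ⟨(e:ℤ)*s - 1, by linear_combination hs⟩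
    have hpar : (2:ℤ) ∣ (x:ℤ) - n := by
      rcases Int.even_or_odd ((x:ℤ) - n) with hev | hod
      · obtain ⟨k, hk⟩ := hev; exact ⟨k, by linarith⟩
      · exfalso
        obtain ⟨k, hk⟩ := id hod
        have hodd2 : Odd ((x:ℤ) + n) := ⟨k + n, by push_cast; linarith⟩
        have hoddp : Odd (((x:ℤ)-n)*((x:ℤ)+n)) := hod.mul hodd2
        obtain ⟨c, hc⟩ := dvd_trans (by norm_num : (2:ℤ) ∣ 4) h4'
        exact (Int.not_odd_iff_even.mpr ⟨c, by linarith⟩) hoddp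
    set m' : ℤ := ((x:ℤ) - n)/2 with hm'def
    have hm'2 : 2 * m' = (x:ℤ) - n := Int.mul_ediv_cancel' hpar
    have hnn : 0 ≤ m' % (e:ℤ) := Int.emod_nonneg _ he'.ne'
    have hlt : m' % (e:ℤ) < (e:ℤ) := Int.emod_lt_of_pos _ he'
    have htn : (((m' % (e:ℤ)).toNat : ℕ) : ℤ) = m' % (e:ℤ) := Int.toNat_of_nonneg hnn
    constructor
    · have : (((m' % (e:ℤ)).toNat : ℕ) : ℤ) < (e:ℤ) := by rw [htn]; exact hlt
      exact_mod_cast this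
    · set m : ℕ := (m' % (e:ℤ)).toNat with hmdef
      have hcong : (m:ℤ) ≡ m' [ZMOD (e:ℤ)] := by
        rw [htn]
        exact Int.emod_emod_of_dvd _ dvd_rfl
      have hcc : (m:ℤ)*(m:ℤ) + (m:ℤ)*n + 1 ≡ m'*m' + m'*n + 1 [ZMOD (e:ℤ)] :=
        ((hcong.mul hcong).add (hcong.mul_right _)).add_right 1
      have hxeq : (x:ℤ) = 2*m' + n := by linarith [hm'2]
      obtain ⟨s, hs⟩ := (hmod'.symm).dvd
      have h4s : (4:ℤ)*(m'*m' + m'*n + 1) = 4*((e:ℤ)*s) := by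
        rw [hxeq] at hs; linear_combination hs
      have hdvd' : (e:ℤ) ∣ m'*m' + m'*n + 1 :=
        ⟨s, mul_left_cancel₀ (by norm_num : (4:ℤ) ≠ 0) h4s⟩
      have hfin : (e:ℤ) ∣ (m:ℤ)*(m:ℤ) + (m:ℤ)*n + 1 := by
        have h1 := hcc.dvd
        have h2 := dvd_sub hdvd' h1
        rwa [sub_sub_cancel] at h2
      have : ((e:ℕ):ℤ) ∣ ((m*m + m*n + 1 : ℕ):ℤ) := by push_cast; exact hfin
      exact_mod_cast this
  · -- left inverse
    intro m hm
    simp only [Finset.mem_coe, Finset.mem_filter, Finset.mem_range] at hm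
    obtain ⟨hmlt, -⟩ := hm
    show (((((2*m+n) % (2*e) : ℕ) : ℤ) - (n:ℤ))/2 % (e:ℤ)).toNat = m
    set x : ℕ := (2*m+n) % (2*e) with hxdef
    have hxz : (x:ℤ) = ((2*m+n : ℤ)) % (2*(e:ℤ)) := by
      rw [hxdef]; push_cast [Int.natCast_mod]; ring_nf
    have : ((x:ℤ) - n)/2 = (m:ℤ) - (e:ℤ) * ((2*(m:ℤ)+n) / (2*(e:ℤ))) := by
      rw [hxz, Int.emod_def]
      rw [show (2*(m:ℤ)+n) - 2*(e:ℤ) * ((2*(m:ℤ)+n) / (2*(e:ℤ))) - n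
          = 2 * ((m:ℤ) - (e:ℤ) * ((2*(m:ℤ)+n) / (2*(e:ℤ)))) by ring]
      exact Int.mul_ediv_cancel_left _ (by norm_num)
    rw [this]
    rw [show (m:ℤ) - (e:ℤ) * ((2*(m:ℤ)+n) / (2*(e:ℤ)))
        = (m:ℤ) + (e:ℤ) * (-((2*(m:ℤ)+n) / (2*(e:ℤ)))) by ring]
    rw [Int.add_mul_emod_self_left]
    rw [Int.emod_eq_of_lt (by positivity) (by exact_mod_cast hmlt)]
    simp
  · -- right inverse
    intro x hx
    simp only [Finset.mem_coe, Finset.mem_filter, Finset.mem_range] at hx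
    obtain ⟨hxlt, hmod⟩ := hx
    show (2 * ((((x:ℤ) - (n:ℤ))/2 % (e:ℤ)).toNat) + n) % (2*e) = x
    have hmod' : (x:ℤ)^2 ≡ (n:ℤ)^2 - 4 [ZMOD 4*(e:ℤ)] := hmod
    have h4' : (4:ℤ) ∣ ((x:ℤ)-n)*((x:ℤ)+n) := by
      obtain ⟨s, hs⟩ := (hmod'.symm).dvd
      exact ⟨(e:ℤ)*s - 1, by linear_combination hs⟩
    have hpar : (2:ℤ) ∣ (x:ℤ) - n := by
      rcases Int.even_or_odd ((x:ℤ) - n) with hev | hod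
      · obtain ⟨k, hk⟩ := hev; exact ⟨k, by linarith⟩
      · exfalso
        obtain ⟨k, hk⟩ := id hod
        have hodd2 : Odd ((x:ℤ) + n) := ⟨k + n, by push_cast; linarith⟩
        have hoddp : Odd (((x:ℤ)-n)*((x:ℤ)+n)) := hod.mul hodd2
        obtain ⟨c, hc⟩ := dvd_trans (by norm_num : (2:ℤ) ∣ 4) h4'
        exact (Int.not_odd_iff_even.mpr ⟨c, by linarith⟩) hoddp
    set m' : ℤ := ((x:ℤ) - n)/2 with hm'def
    have hm'2 : 2 * m' = (x:ℤ) - n := Int.mul_ediv_cancel' hpar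
    have hnn : 0 ≤ m' % (e:ℤ) := Int.emod_nonneg _ he'.ne'
    have htn : (((m' % (e:ℤ)).toNat : ℕ) : ℤ) = m' % (e:ℤ) := Int.toNat_of_nonneg hnn
    set m : ℕ := (m' % (e:ℤ)).toNat with hmdef
    have hcong : (m:ℤ) ≡ m' [ZMOD (e:ℤ)] := by
      rw [htn]; exact Int.emod_emod_of_dvd _ dvd_rfl
    have h2 : (2*(m:ℤ) + n) ≡ (x:ℤ) [ZMOD 2*(e:ℤ)] := by
      have := (hcong.mul_left' (c := 2)).add_right (n:ℤ)
      have hxeq : (x:ℤ) = 2*m' + n := by linarith [hm'2]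
      rw [hxeq]; exact this
    -- conclude nat equality
    have hcast : (((2*m+n) % (2*e) : ℕ) : ℤ) = (2*(m:ℤ)+n) % (2*(e:ℤ)) := by
      push_cast [Int.natCast_mod]; ring_nf
    have : (((2*m+n) % (2*e) : ℕ) : ℤ) = (x:ℤ) := by
      rw [hcast, h2]
      exact Int.emod_eq_of_lt (by positivity) (by exact_mod_cast hxlt)
    exact_mod_cast this


lemma reindex_k (Q : ℕ) (hQ : 0 < Q) (n y v : ℕ) (hyv : y * v ≡ 1 [MOD Q]) :
    ∑ k ∈ Finset.range Q, psi Q (k*n + k*k*y + v)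
      = ∑ m ∈ Finset.range Q, psi Q (v * (m*m + m*n + 1)) := by
  have hvy : v * y ≡ 1 [MOD Q] := by rwa [mul_comm] at hyv
  refine Finset.sum_nbij' (fun k => (y*k) % Q) (fun m => (v*m) % Q) ?_ ?_ ?_ ?_ ?_
  · intro k hk; simp only [Finset.mem_range] at hk ⊢; exact Nat.mod_lt _ hQ
  · intro m hm; simp only [Finset.mem_range] at hm ⊢; exact Nat.mod_lt _ hQ
  · intro k hk
    simp only [Finset.mem_range] at hk
    have h1 : (v * ((y*k) % Q)) ≡ k [MOD Q] := by
      calc v * ((y*k) % Q) ≡ v * (y*k) [MOD Q] :=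
            Nat.ModEq.mul_left v (Nat.mod_mod_of_dvd _ dvd_rfl)
        _ = (v*y) * k := by ring
        _ ≡ 1 * k [MOD Q] := hvy.mul_right k
        _ = k := by ring
    have h2 : (v * ((y*k) % Q)) % Q = k % Q := h1
    rw [Nat.mod_eq_of_lt hk] at h2
    exact h2
  · intro m hm
    simp only [Finset.mem_range] at hm
    have h1 : (y * ((v*m) % Q)) ≡ m [MOD Q] := by
      calc y * ((v*m) % Q) ≡ y * (v*m) [MOD Q] :=
            Nat.ModEq.mul_left y (Nat.mod_mod_of_dvd _ dvd_rfl)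
        _ = (y*v) * m := by ring
        _ ≡ 1 * m [MOD Q] := hyv.mul_right m
        _ = m := by ring
    have h2 : (y * ((v*m) % Q)) % Q = m % Q := h1
    rw [Nat.mod_eq_of_lt hm] at h2
    exact h2
  · intro k hk
    simp only [Finset.mem_range] at hk
    set m : ℕ := (y*k) % Q with hmdef
    have hm : m ≡ y*k [MOD Q] := Nat.mod_mod_of_dvd _ dvd_rfl
    refine (psi_congr Q hQ ?_).symm
    calc v * (m*m + m*n + 1)
        ≡ v * ((y*k)*(y*k) + (y*k)*n + 1) [MOD Q] :=
          Nat.ModEq.mul_left v (((hm.mul hm).add (hm.mul_right n)).add_right 1)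
      _ = (k*k*y)*(y*v) + (k*n)*(y*v) + v := by ring
      _ ≡ (k*k*y)*1 + (k*n)*1 + v [MOD Q] :=
          (((Nat.ModEq.refl _).mul hyv).add ((Nat.ModEq.refl _).mul hyv)).add_right v
      _ = k*n + k*k*y + v := by ring

lemma reindex_inv (Q : ℕ) (hQ : 0 < Q) (F : ℕ → ℂ) :
    ∑ y ∈ (Finset.range Q).filter (fun y => Nat.Coprime y Q),
        F ((((y : ZMod Q)⁻¹ : ZMod Q)).val)
      = ∑ u ∈ (Finset.range Q).filter (fun u => Nat.Coprime u Q), F u := by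
  haveI : NeZero Q := ⟨hQ.ne'⟩
  have hmem : ∀ y, y ∈ (Finset.range Q).filter (fun y => Nat.Coprime y Q) →
      (((y : ZMod Q)⁻¹ : ZMod Q)).val ∈ (Finset.range Q).filter (fun u => Nat.Coprime u Q) := by
    intro y hy
    simp only [Finset.mem_filter, Finset.mem_range] at hy ⊢
    obtain ⟨hlt, hcop⟩ := hy
    refine ⟨ZMod.val_lt _, ?_⟩
    have : ((y : ZMod Q)⁻¹ : ZMod Q) = ((ZMod.unitOfCoprime y hcop)⁻¹ : (ZMod Q)ˣ) := by
      rw [← ZMod.coe_unitOfCoprime y hcop, ZMod.inv_coe_unit]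
    rw [this]
    exact ZMod.val_coe_unit_coprime _
  have hinv : ∀ y, y ∈ (Finset.range Q).filter (fun y => Nat.Coprime y Q) →
      ((((((y : ZMod Q)⁻¹ : ZMod Q)).val : ℕ) : ZMod Q)⁻¹).val = y := by
    intro y hy
    simp only [Finset.mem_filter, Finset.mem_range] at hy
    obtain ⟨hlt, hcop⟩ := hy
    have h1 : (((((y : ZMod Q)⁻¹ : ZMod Q)).val : ℕ) : ZMod Q) = ((y : ZMod Q)⁻¹ : ZMod Q) :=
      ZMod.natCast_zmod_val _
    rw [h1]
    have h2 : ((y : ZMod Q)⁻¹ : ZMod Q) = ((ZMod.unitOfCoprime y hcop)⁻¹ : (ZMod Q)ˣ) := by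
      rw [← ZMod.coe_unitOfCoprime y hcop, ZMod.inv_coe_unit]
    rw [h2, ZMod.inv_coe_unit, inv_inv, ZMod.coe_unitOfCoprime, ZMod.val_cast_of_lt hlt]
  exact Finset.sum_nbij' (fun y => (((y : ZMod Q)⁻¹ : ZMod Q)).val)
    (fun u => (((u : ZMod Q)⁻¹ : ZMod Q)).val) hmem hmem hinv hinv (fun y _ => rfl)

lemma key_lemma (Q : ℕ) (hQ : 0 < Q) (n : ℕ) (hn : 3 ≤ n) :
    ∑ k ∈ Finset.range Q, eC ((k * n : ℕ) / (Q:ℝ)) * kloos ((k:ℤ)^2) 1 Q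
      = (Q:ℂ) * ∑ d ∈ Q.divisors, (moebius d : ℂ) * (rho (Q/d) ((n:ℤ)^2 - 4) : ℂ) := by
  haveI : NeZero Q := ⟨hQ.ne'⟩
  set R := (Finset.range Q).filter (fun y => Nat.Coprime y Q) with hR
  -- Step A+B+C : rewrite LHS as double sum of psi
  have stepABC : ∑ k ∈ Finset.range Q, eC ((k * n : ℕ) / (Q:ℝ)) * kloos ((k:ℤ)^2) 1 Q
      = ∑ y ∈ R, ∑ k ∈ Finset.range Q,
          psi Q (k*n + k*k*y + (((y : ZMod Q)⁻¹ : ZMod Q)).val) := by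
    rw [Finset.sum_comm]
    refine Finset.sum_congr rfl fun k _ => ?_
    unfold kloos
    rw [Finset.mul_sum]
    refine Finset.sum_congr rfl fun y _ => ?_
    set v : ℕ := (((y : ZMod Q)⁻¹ : ZMod Q)).val
    have harg : (((((k:ℤ)^2 * y + 1 * ((v : ℕ) : ℤ)) : ℤ) : ℝ)) / (Q:ℝ)
        = ((k*k*y + v : ℕ) : ℝ) / (Q:ℝ) := by
      congr 1
      push_cast
      ring
    rw [harg]
    show eC ((k * n : ℕ) / (Q:ℝ)) * psi Q (k*k*y + v) = psi Q (k*n + k*k*y + v)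
    rw [show k*n + k*k*y + v = k*n + (k*k*y + v) by ring]
    conv_rhs => rw [psi_add]
    rfl
  rw [stepABC]
  -- Step D : reindex k
  have stepD : ∀ y ∈ R,
      ∑ k ∈ Finset.range Q, psi Q (k*n + k*k*y + (((y : ZMod Q)⁻¹ : ZMod Q)).val)
        = ∑ m ∈ Finset.range Q, psi Q ((((y : ZMod Q)⁻¹ : ZMod Q)).val * (m*m + m*n + 1)) := by
    intro y hy
    simp only [hR, Finset.mem_filter, Finset.mem_range] at hy
    obtain ⟨hlt, hcop⟩ := hy
    set v : ℕ := (((y : ZMod Q)⁻¹ : ZMod Q)).val with hvdef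
    have hyv : y * v ≡ 1 [MOD Q] := by
      have h1 : ((y * v : ℕ) : ZMod Q) = ((1 : ℕ) : ZMod Q) := by
        push_cast
        rw [hvdef, ZMod.natCast_zmod_val]
        exact ZMod.coe_mul_inv_eq_one y hcop
      exact (ZMod.natCast_eq_natCast_iff _ _ _).mp h1
    exact reindex_k Q hQ n y v hyv
  rw [Finset.sum_congr rfl stepD, Finset.sum_comm]
  -- Step E : reindex y ↦ y⁻¹ and apply Ramanujan
  have stepE : ∀ m : ℕ,
      ∑ y ∈ R, psi Q ((((y : ZMod Q)⁻¹ : ZMod Q)).val * (m*m + m*n + 1))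
        = ∑ d ∈ Q.divisors, (moebius d : ℂ)
            * (if (Q/d) ∣ (m*m + m*n + 1) then ((Q/d : ℕ) : ℂ) else 0) := by
    intro m
    rw [hR, reindex_inv Q hQ (fun u => psi Q (u * (m*m + m*n + 1)))]
    exact ramanujan Q hQ (m*m + m*n + 1)
  rw [Finset.sum_congr rfl (fun m _ => stepE m), Finset.sum_comm]
  -- Step F : evaluate the m-sum for each divisor
  rw [Finset.mul_sum]
  refine Finset.sum_congr rfl fun d hd => ?_
  obtain ⟨hdvd, -⟩ := Nat.mem_divisors.mp hd
  have hd0 : 0 < d := Nat.pos_of_dvd_of_pos hdvd hQ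
  set e : ℕ := Q / d with hedef
  have he : 0 < e := Nat.div_pos (Nat.le_of_dvd hQ hdvd) hd0
  have hQde : Q = d * e := (Nat.mul_div_cancel' hdvd).symm
  have hper : ∀ m : ℕ, (if e ∣ ((m+e)*(m+e) + (m+e)*n + 1) then ((e : ℕ) : ℂ) else 0)
      = (if e ∣ (m*m + m*n + 1) then ((e : ℕ) : ℂ) else 0) := by
    intro m
    have hsplit : (m+e)*(m+e) + (m+e)*n + 1 = e*(m + m + e + n) + (m*m + m*n + 1) := by ring
    rw [hsplit]
    congr 1
    rw [eq_iff_iff]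
    exact Nat.dvd_add_right (Dvd.intro _ rfl)
  have hsum : ∑ m ∈ Finset.range Q,
      (moebius d : ℂ) * (if e ∣ (m*m + m*n + 1) then ((e : ℕ) : ℂ) else 0)
      = (d:ℂ) * ∑ m ∈ Finset.range e,
          (moebius d : ℂ) * (if e ∣ (m*m + m*n + 1) then ((e : ℕ) : ℂ) else 0) := by
    rw [hQde]
    exact sum_range_mul_periodic
      (fun m => (moebius d : ℂ) * (if e ∣ (m*m + m*n + 1) then ((e : ℕ) : ℂ) else 0)) e d
      (fun m => congrArg (fun z => (moebius d : ℂ) * z) (hper m))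
  rw [hsum]
  have hcount : ∑ m ∈ Finset.range e,
      (moebius d : ℂ) * (if e ∣ (m*m + m*n + 1) then ((e : ℕ) : ℂ) else 0)
      = (moebius d : ℂ) * ((e:ℂ) * (rho e ((n:ℤ)^2 - 4) : ℂ)) := by
    rw [← Finset.mul_sum]
    congr 1
    rw [← Finset.sum_filter, Finset.sum_const, ← count_eq_rho e n he hn, nsmul_eq_mul]
    ring
  rw [hcount]
  have hcast : (d:ℂ) * (e:ℂ) = (Q:ℂ) := by
    rw [hQde]; push_cast; ring
  rw [← hcast]
  ring

end helpers

theorem lam_eq_kloosterman_sum (q : ℕ) (hq : 0 < q) (n : ℕ) (hn : 3 ≤ n) :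
    (lam q ((n : ℤ) ^ 2 - 4) : ℂ) =
      ∑ p ∈ ((Finset.range (q + 1)) ×ˢ (Finset.range (q + 1))).filter
          (fun p => p.1 ^ 2 * p.2 = q),
        (1 / (p.2 : ℂ)) *
          ∑ k ∈ Finset.range p.2, eC ((k * n : ℕ) / (p.2 : ℝ)) * kloos ((k : ℤ) ^ 2) 1 p.2 := by
  classical
  have key : ∀ p : ℕ × ℕ, p ∈ (((Finset.range (q+1)) ×ˢ (Finset.range (q+1))).filter
        (fun p => p.1^2 * p.2 = q)) →
      (1 / (p.2 : ℂ)) * ∑ k ∈ Finset.range p.2,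
          eC ((k * n : ℕ) / (p.2 : ℝ)) * kloos ((k:ℤ)^2) 1 p.2
        = ∑ bc ∈ Nat.divisorsAntidiagonal p.2,
            (moebius bc.1 : ℂ) * (rho bc.2 ((n:ℤ)^2-4) : ℂ) := by
    intro p hp
    simp only [Finset.mem_filter, Finset.mem_product, Finset.mem_range] at hp
    have hp2 : 0 < p.2 := by
      rcases Nat.eq_zero_or_pos p.2 with h | h
      · exfalso
        have := hp.2
        rw [h, mul_zero] at this
        omega
      · exact h
    have hne : (p.2 : ℂ) ≠ 0 := Nat.cast_ne_zero.mpr hp2.ne'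
    rw [key_lemma p.2 hp2 n hn, ← mul_assoc, one_div_mul_cancel hne, one_mul]
    rw [← Nat.sum_divisorsAntidiagonal (fun b c => (moebius b : ℂ) * (rho c ((n:ℤ)^2-4) : ℂ))]
  rw [Finset.sum_congr rfl key, Finset.sum_sigma']
  unfold lam
  push_cast
  refine Finset.sum_nbij'
    (fun t => (⟨(t.1, t.2.1 * t.2.2), (t.2.1, t.2.2)⟩ : Σ _ : ℕ × ℕ, ℕ × ℕ))
    (fun x => (x.1.1, x.2.1, x.2.2)) ?_ ?_ ?_ ?_ ?_
  · rintro ⟨a, b, c⟩ ht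
    simp only [Finset.mem_filter, Finset.mem_product, Finset.mem_range] at ht
    obtain ⟨⟨ha, hb, hc⟩, heq⟩ := ht
    have hbc : 0 < b * c := by
      rcases Nat.eq_zero_or_pos (b * c) with h | h
      · exfalso
        have : a^2 * b * c = a^2 * (b*c) := by ring
        rw [this, h, mul_zero] at heq
        omega
      · exact h
    simp only [Finset.mem_sigma, Finset.mem_filter, Finset.mem_product, Finset.mem_range,
      Nat.mem_divisorsAntidiagonal]
    have hdq : b * c ∣ q := ⟨a^2, by rw [← heq]; ring⟩
    have hle := Nat.le_of_dvd hq hdq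
    exact ⟨⟨⟨ha, by omega⟩, by rw [← heq]; ring⟩, trivial, hbc.ne'⟩
  · rintro ⟨⟨a, Q⟩, b, c⟩ hx
    simp only [Finset.mem_sigma, Finset.mem_filter, Finset.mem_product, Finset.mem_range,
      Nat.mem_divisorsAntidiagonal] at hx
    obtain ⟨⟨⟨ha, hQ⟩, heq⟩, hbc, hQ0⟩ := hx
    simp only [Finset.mem_filter, Finset.mem_product, Finset.mem_range]
    have hb1 : b ≤ b * c := Nat.le_mul_of_pos_right b (by
      rcases Nat.eq_zero_or_pos c with h | h
      · exfalso; rw [h, mul_zero] at hbc; exact hQ0 hbc.symm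
      · exact h)
    have hc1 : c ≤ b * c := Nat.le_mul_of_pos_left c (by
      rcases Nat.eq_zero_or_pos b with h | h
      · exfalso; rw [h, zero_mul] at hbc; exact hQ0 hbc.symm
      · exact h)
    rw [hbc] at hb1 hc1
    refine ⟨⟨ha, by omega, by omega⟩, ?_⟩
    show a^2 * b * c = q
    rw [show a^2 * b * c = a^2 * (b * c) by ring, hbc, heq]
  · rintro ⟨a, b, c⟩ _
    rfl
  · rintro ⟨⟨a, Q⟩, b, c⟩ hx
    simp only [Finset.mem_sigma, Nat.mem_divisorsAntidiagonal] at hx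
    obtain ⟨-, hbc, -⟩ := hx
    show (⟨(a, b * c), (b, c)⟩ : Σ _ : ℕ × ℕ, ℕ × ℕ) = ⟨(a, Q), (b, c)⟩
    rw [hbc]
  · rintro ⟨a, b, c⟩ _
    rfl
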